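/- Let μ > 0 be non-integer, m = ⌈μ⌉, ν = m - μ, t ∈ ℕ_{a+m}, f defined on ℕ_a, a ∈ ℤ⁺. Then |f(t) - ∑_{k=0}^{m-1} ((t-a)^(k)/k!)·Δ^k f(a)| ≤ ((t-a-ν)^(μ)/Γ(μ+1))·max_{s ∈ {a+ν, a+ν+1, ..., t-μ}} |Δ_*^μ f(s)|. -/

import Mathlib

open Finset

/-- Generalized falling factorial `t^(α) = Γ(t+1)/Γ(t-α+1)`. -/
noncomputable def gff (t α : ℝ) : ℝ := Real.Gamma (t + 1) / Real.Gamma (t - α + 1)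

/-- Forward difference operator `Δf(t) = f(t+1) - f(t)`. -/
def fdiff (f : ℝ → ℝ) : ℝ → ℝ := fun t => f (t + 1) - f t

/-- The ν-th fractional sum with base point `a`:
`Δ^{-ν} f(t) = (1/Γ(ν)) ∑_{s=a}^{t-ν} (t-s-1)^(ν-1) f(s)`, the sum running over
`s = a, a+1, ..., t-ν` (for `t ∈ ℕ_{a+ν}`, there are `t-ν-a+1` terms). -/
noncomputable def fsum (ν a : ℝ) (f : ℝ → ℝ) (t : ℝ) : ℝ :=
  (1 / Real.Gamma ν) *
    ∑ j ∈ Finset.range ((⌊t - ν - a⌋).toNat + 1),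
      gff (t - (a + j) - 1) (ν - 1) * f (a + j)

/-- The Caputo-like fractional difference `Δ_*^μ f = Δ^{-(⌈μ⌉-μ)} (Δ^{⌈μ⌉} f)`. -/
noncomputable def caputo (μ a : ℝ) (f : ℝ → ℝ) : ℝ → ℝ :=
  fsum ((⌈μ⌉₊ : ℝ) - μ) a (fdiff^[⌈μ⌉₊] f)

/-!
On the lattice `a + ℕ` a fractional sum of order `x > 0` is convolution with the coefficients
`Γ(x + n) / n! = Γ x · x(x+1)⋯(x+n-1)/n!` of `Γ x · (1 - X)^(-x)`. Writing `F_k` for the generating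
series of `n ↦ Δ^k f (a + n)`, the values `Δ_*^μ f (a + ν + i)` therefore have generating series
`(1 - X)^(-ν) F_m`, and multiplying by `(1 - X)^(-μ)` gives `(1 - X)^(-m) F_m`. Iterating
`(1 - X) F_k = Δ^k f a + X F_(k+1)` shows that the `j`-th coefficient of `(1 - X)^(-m) F_m` is the
integer-order Taylor remainder `f (a + m + j) - ∑_{k<m} C(m+j, k) Δ^k f a`. The coefficients of
`(1 - X)^(-μ)` are positive and their partial sums are the coefficients of `(1 - X)^(-(μ+1))`,
which equal `(μ + j)^(μ) / Γ(μ + 1)`; this gives the estimate.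
-/

open PowerSeries

lemma Real.Gamma_add_nat_eq_mul_multichoose {x : ℝ} (hx : 0 < x) (n : ℕ) :
    Real.Gamma (x + n) = Real.Gamma x * n.factorial * Ring.multichoose x n := by
  rw [mul_assoc, ← nsmul_eq_mul, Ring.factorial_nsmul_multichoose_eq_ascPochhammer,
    Polynomial.ascPochhammer_smeval_eq_eval]
  induction n with
  | zero => simp
  | succ n ih =>
    rw [ascPochhammer_succ_eval, ← mul_assoc, ← ih, Nat.cast_succ, ← add_assoc,
      Real.Gamma_add_one (by positivity), mul_comm]

lemma Ring.multichoose_pos {x : ℝ} (hx : 0 < x) (n : ℕ) : 0 < Ring.multichoose x n := by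
  have h := Ring.factorial_nsmul_multichoose_eq_ascPochhammer x n
  rw [Polynomial.ascPochhammer_smeval_eq_eval, nsmul_eq_mul] at h
  exact pos_of_mul_pos_right (h ▸ ascPochhammer_pos n x hx) (by positivity)

lemma gff_eq_Gamma_mul_multichoose {x : ℝ} (hx : 0 < x) (n : ℕ) :
    gff (x + n - 1) (x - 1) = Real.Gamma x * Ring.multichoose x n := by
  rw [gff, sub_add_cancel, show x + n - 1 - (x - 1) + 1 = n + 1 by ring,
    Real.Gamma_nat_eq_factorial, Real.Gamma_add_nat_eq_mul_multichoose hx]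
  field_simp

lemma gff_natCast_div_factorial {n k : ℕ} (h : k ≤ n) :
    gff n k / k.factorial = n.choose k := by
  rw [gff, Real.Gamma_nat_eq_factorial, ← Nat.cast_sub h, Real.Gamma_nat_eq_factorial,
    Nat.cast_choose ℝ h]
  field_simp

/-- The binomial series of `(1 - X)^(-x)`. -/
noncomputable def invOneSubRpow (x : ℝ) : ℝ⟦X⟧ := rescale (-1) (binomialSeries ℝ (-x))

@[simp]
lemma coeff_invOneSubRpow (x : ℝ) (n : ℕ) : coeff n (invOneSubRpow x) = Ring.multichoose x n := by
  rw [invOneSubRpow, coeff_rescale, binomialSeries_coeff, Ring.choose_neg', Units.smul_def,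
    Int.coe_negOnePow_natCast, smul_eq_mul, zsmul_eq_mul, mul_one]
  push_cast
  rw [← mul_assoc, ← mul_pow]
  simp

lemma invOneSubRpow_add (x y : ℝ) :
    invOneSubRpow (x + y) = invOneSubRpow x * invOneSubRpow y := by
  rw [invOneSubRpow, neg_add, binomialSeries_add, map_mul]; rfl

@[simp]
lemma invOneSubRpow_zero : invOneSubRpow 0 = 1 := by
  simp [invOneSubRpow]

lemma invOneSubRpow_one : invOneSubRpow 1 = PowerSeries.mk 1 := by
  ext n; simp [Ring.multichoose_one]

lemma coeff_invOneSubRpow_natCast_add_one (k n : ℕ) :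
    coeff n (invOneSubRpow (k + 1)) = (k + n).choose k := by
  rw [coeff_invOneSubRpow, Ring.multichoose_eq, show (k : ℝ) + 1 + n - 1 = ((k + n : ℕ) : ℝ) by
    push_cast; ring, Ring.choose_natCast, Nat.choose_symm_add]

noncomputable def genSeries (f : ℝ → ℝ) (a : ℝ) : ℝ⟦X⟧ := PowerSeries.mk fun n => f (a + n)

lemma one_sub_X_mul_genSeries (f : ℝ → ℝ) (a : ℝ) :
    (1 - X) * genSeries f a = C (f a) + X * genSeries (fdiff f) a := by
  ext (_ | n)
  · simp [genSeries, sub_mul]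
  · simp only [sub_mul, one_mul, map_sub, map_add, coeff_succ_X_mul, coeff_C, genSeries, coeff_mk,
      fdiff]
    push_cast
    ring_nf

lemma genSeries_eq_sum_add_X_pow_mul (f : ℝ → ℝ) (a : ℝ) (m : ℕ) :
    genSeries f a = ∑ k ∈ range m, C (fdiff^[k] f a) * X ^ k * invOneSubRpow (k + 1) +
      X ^ m * invOneSubRpow m * genSeries (fdiff^[m] f) a := by
  induction m with
  | zero => simp
  | succ m ih =>
    have hinv : invOneSubRpow m = invOneSubRpow (m + 1) * (1 - X) := by
      rw [invOneSubRpow_add, invOneSubRpow_one, mul_assoc, mk_one_mul_one_sub_eq_one, mul_one]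
    rw [ih, hinv, sum_range_succ, Function.iterate_succ_apply', Nat.cast_succ]
    linear_combination X ^ m * invOneSubRpow (m + 1) * one_sub_X_mul_genSeries (fdiff^[m] f) a

lemma sub_sum_choose_mul_fdiff_eq_coeff (f : ℝ → ℝ) (a : ℝ) (m j : ℕ) :
    f (a + (m + j : ℕ)) - ∑ k ∈ range m, ((m + j).choose k : ℝ) * fdiff^[k] f a =
      coeff j (invOneSubRpow m * genSeries (fdiff^[m] f) a) := by
  have h := congrArg (coeff (m + j)) (genSeries_eq_sum_add_X_pow_mul f a m)
  have hterm : ∀ k ∈ range m,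
      coeff (m + j) (C (fdiff^[k] f a) * X ^ k * invOneSubRpow (k + 1)) =
        ((m + j).choose k : ℝ) * fdiff^[k] f a := by
    intro k hk
    have hk : k ≤ m + j := by have := mem_range.mp hk; omega
    rw [mul_assoc, coeff_C_mul, coeff_X_pow_mul', if_pos hk, coeff_invOneSubRpow_natCast_add_one,
      Nat.add_sub_of_le hk, mul_comm]
  rw [genSeries, coeff_mk, map_add, map_sum, sum_congr rfl hterm, mul_assoc, coeff_X_pow_mul',
    if_pos (Nat.le_add_right m j), Nat.add_sub_cancel_left] at h
  rw [h]
  ring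

lemma fsum_add_natCast {ν : ℝ} (hν : 0 < ν) (a : ℝ) (g : ℝ → ℝ) (i : ℕ) :
    fsum ν a g (a + ν + i) = coeff i (genSeries g a * invOneSubRpow ν) := by
  have hterm : ∀ p ∈ range (i + 1), gff (a + ν + i - (a + p) - 1) (ν - 1) * g (a + p) =
      Real.Gamma ν * (g (a + p) * Ring.multichoose ν (i - p)) := by
    intro p hp
    rw [show a + ν + i - (a + p) - 1 = ν + (i - p : ℕ) - 1 by
      rw [Nat.cast_sub (Nat.le_of_lt_succ (mem_range.mp hp))]; ring,
      gff_eq_Gamma_mul_multichoose hν]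
    ring
  rw [fsum, show a + ν + i - ν - a = (i : ℝ) by ring, Int.floor_natCast, Int.toNat_natCast,
    sum_congr rfl hterm, ← mul_sum, coeff_mul,
    Nat.sum_antidiagonal_eq_sum_range_succ (fun p q => coeff p (genSeries g a) * coeff q _)]
  field_simp [(Real.Gamma_pos_of_pos hν).ne']
  simp [genSeries]

lemma abs_coeff_invOneSubRpow_mul_le {x : ℝ} (hx : 0 < x) (c : ℕ → ℝ) (j : ℕ) :
    |coeff j (invOneSubRpow x * PowerSeries.mk c)| ≤
      coeff j (invOneSubRpow (x + 1)) *
        (range (j + 1)).sup' nonempty_range_add_one (fun i => |c i|) := by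
  set M := (range (j + 1)).sup' nonempty_range_add_one (fun i => |c i|)
  calc |coeff j (invOneSubRpow x * PowerSeries.mk c)|
      ≤ ∑ p ∈ antidiagonal j, Ring.multichoose x p.1 * |c p.2| := by
        rw [coeff_mul]
        refine (abs_sum_le_sum_abs _ _).trans_eq (sum_congr rfl fun p _ => ?_)
        rw [abs_mul, coeff_invOneSubRpow, coeff_mk, abs_of_pos (Ring.multichoose_pos hx _)]
    _ ≤ ∑ p ∈ antidiagonal j, Ring.multichoose x p.1 * M := by
        refine sum_le_sum fun p hp => mul_le_mul_of_nonneg_left ?_ (Ring.multichoose_pos hx _).le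
        exact le_sup' (fun i => |c i|) (mem_range.mpr (Nat.antidiagonal.snd_lt hp))
    _ = coeff j (invOneSubRpow (x + 1)) * M := by
        simp [invOneSubRpow_add, invOneSubRpow_one, coeff_mul, sum_mul]

theorem stmt11 (μ ν : ℝ) (hμ : 0 < μ) (hni : ∀ n : ℤ, μ ≠ n) (m : ℕ)
    (hm : m = ⌈μ⌉₊) (hν : ν = m - μ) (f : ℝ → ℝ) (a j : ℕ) (t : ℝ)
    (ht : t = a + m + j) :
    |f t - ∑ k ∈ Finset.range m, gff (t - a) k / (k.factorial : ℝ) * fdiff^[k] f a| ≤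
      gff (t - a - ν) μ / Real.Gamma (μ + 1) *
        (Finset.range (j + 1)).sup' Finset.nonempty_range_add_one
          (fun i => |caputo μ a f (a + ν + i)|) := by
  have hμm : μ < m := (hm ▸ Nat.le_ceil μ).lt_of_ne fun h => hni m (mod_cast h)
  have hνpos : 0 < ν := by linarith
  have hta : t - a = (m + j : ℕ) := by rw [ht]; push_cast; ring
  have hcaputo : PowerSeries.mk (fun i : ℕ => caputo μ a f (a + ν + i)) =
      genSeries (fdiff^[m] f) a * invOneSubRpow ν := by
    ext i
    rw [coeff_mk, caputo, ← hm, ← hν, fsum_add_natCast hνpos]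
  have htaylor : ∑ k ∈ range m, gff (t - a) k / (k.factorial : ℝ) * fdiff^[k] f a =
      ∑ k ∈ range m, ((m + j).choose k : ℝ) * fdiff^[k] f a :=
    sum_congr rfl fun k hk => by
      rw [hta, gff_natCast_div_factorial (by have := mem_range.mp hk; omega)]
  have hremainder : f t - ∑ k ∈ range m, gff (t - a) k / (k.factorial : ℝ) * fdiff^[k] f a =
      coeff j (invOneSubRpow μ * PowerSeries.mk (fun i : ℕ => caputo μ a f (a + ν + i))) := by
    rw [htaylor, show t = a + (m + j : ℕ) by linarith, sub_sum_choose_mul_fdiff_eq_coeff, hcaputo,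
      mul_left_comm, ← invOneSubRpow_add, show μ + ν = m by linarith, mul_comm]
  have hconst : gff (t - a - ν) μ / Real.Gamma (μ + 1) = coeff j (invOneSubRpow (μ + 1)) := by
    have hμ1 : 0 < μ + 1 := by linarith
    have h := gff_eq_Gamma_mul_multichoose hμ1 j
    rw [add_sub_cancel_right] at h
    rw [show t - a - ν = μ + 1 + j - 1 by rw [hta]; push_cast; linarith, h]
    simp [(Real.Gamma_pos_of_pos hμ1).ne']
  rw [hremainder, hconst]
  exact abs_coeff_invOneSubRpow_mul_le hμ _ j
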